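/- arXiv:2511.19959 — 2 statements merged into one kernel-verified Lean document; each statement's English description precedes it below -/
import Mathlib

section
/- Let the coordinates of ℝ^d be partitioned into B disjoint blocks, and for a block b let P_b : ℝ^d → ℝ^d be the linear map keeping the coordinates in block b and setting all other coordinates to zero. Fix a block-selection sequence b : ℕ → {1,…,B}, a global step size η > 0, and sequences (Δ_s)_{s≥0} and (Δ_s^i)_{s≥0} of vectors in ℝ^d with P_{b_s} Δ_s = Δ_s and P_{b_s} Δ_s^i = Δ_s^i for all s. Define the local iterates of client i by θ_1^i = θ_0 + η Δ_0^i and, for t ≥ 1, θ_{t+1}^i = θ_t^i + η Δ_t^i + η (Δ_{t-1} − Δ_{t-1}^i). Assume consecutive selected blocks are distinct, i.e. b_t ≠ b_{t-1} for all t ≥ 1. Then for every t ≥ 1, the block b_{t-1} of the local model satisfies P_{b_{t-1}} θ_{t+1}^i = P_{b_{t-1}} θ_0 + η Σ_{s=0}^{t-1} 𝟙[b_s = b_{t-1}] P_{b_{t-1}} Δ_s; in particular this block of the local model depends only on the initial model θ_0 and the aggregated global updates Δ_s, not on the client-specific updates Δ_s^i. -/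
/-- `blockProj blk b` keeps the coordinates of `ℝ^d` lying in block `b`
(according to the block assignment `blk : Fin d → Fin B`) and sets all other
coordinates to zero. -/
noncomputable def blockProj {d B : ℕ} (blk : Fin d → Fin B) (b : Fin B)
    (x : EuclideanSpace ℝ (Fin d)) : EuclideanSpace ℝ (Fin d) :=
  WithLp.toLp 2 (fun j => if blk j = b then x j else 0)

lemma blockProj_add {d B : ℕ} (blk : Fin d → Fin B) (c : Fin B)
    (x y : EuclideanSpace ℝ (Fin d)) :
    blockProj blk c (x + y) = blockProj blk c x + blockProj blk c y := by
  ext j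
  simp only [blockProj, PiLp.toLp_apply, PiLp.add_apply]
  split <;> simp

lemma blockProj_smul {d B : ℕ} (blk : Fin d → Fin B) (c : Fin B) (r : ℝ)
    (x : EuclideanSpace ℝ (Fin d)) :
    blockProj blk c (r • x) = r • blockProj blk c x := by
  ext j
  simp only [blockProj, PiLp.toLp_apply, PiLp.smul_apply, smul_eq_mul]
  split <;> simp

lemma blockProj_sum {d B : ℕ} (blk : Fin d → Fin B) (c : Fin B)
    (F : Finset ℕ) (f : ℕ → EuclideanSpace ℝ (Fin d)) :
    blockProj blk c (∑ s ∈ F, f s) = ∑ s ∈ F, blockProj blk c (f s) := by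
  induction F using Finset.cons_induction with
  | empty => ext j; simp [blockProj]
  | cons a F ha ih => rw [Finset.sum_cons, blockProj_add, ih, Finset.sum_cons]

lemma blockProj_ne {d B : ℕ} (blk : Fin d → Fin B) {c c' : Fin B} (h : c' ≠ c)
    (x : EuclideanSpace ℝ (Fin d)) (hx : blockProj blk c' x = x) :
    blockProj blk c x = 0 := by
  ext j
  rw [← hx]
  simp only [blockProj, PiLp.toLp_apply]
  split
  · split
    · exact absurd (by grind) h
    · rfl
  · rfl

/-- **Closed form of the ParaBlock local iterates (Eq. (3)).**
With updates `Δ` (aggregated) and `Δi` (client `i`'s local updates), each supported on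
the selected block, local iterates `θ 1 = θ 0 + η Δi 0` and, for `t ≥ 1`,
`θ (t+1) = θ t + η Δi t + η (Δ (t-1) - Δi (t-1))`, and consecutive selected blocks
distinct, block `b (t-1)` of the local model equals the corresponding block of the
initial model plus the aggregated global updates on that block. -/
theorem paraBlock_local_closed_form
    {d B : ℕ} (blk : Fin d → Fin B) (b : ℕ → Fin B) (η : ℝ) (hη : 0 < η)
    (Δ Δi : ℕ → EuclideanSpace ℝ (Fin d))
    (hΔsupp : ∀ s, blockProj blk (b s) (Δ s) = Δ s)
    (hΔisupp : ∀ s, blockProj blk (b s) (Δi s) = Δi s)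
    (θ : ℕ → EuclideanSpace ℝ (Fin d))
    (hθ1 : θ 1 = θ 0 + η • Δi 0)
    (hθrec : ∀ t, 1 ≤ t → θ (t + 1) = θ t + η • Δi t + η • (Δ (t - 1) - Δi (t - 1)))
    (hbdist : ∀ t, 1 ≤ t → b t ≠ b (t - 1)) :
    ∀ t, 1 ≤ t →
      blockProj blk (b (t - 1)) (θ (t + 1)) =
        blockProj blk (b (t - 1)) (θ 0) +
          η • ∑ s ∈ Finset.range t,
            (if b s = b (t - 1) then blockProj blk (b (t - 1)) (Δ s) else 0) := by
  -- closed form of the iterates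
  have key : ∀ t, 1 ≤ t → θ (t + 1) = θ 0 + η • Δi t + η • ∑ s ∈ Finset.range t, Δ s := by
    intro t ht
    induction t with
    | zero => omega
    | succ n ih =>
      rcases Nat.eq_or_lt_of_le ht with h1 | h1
      · -- n = 0
        have hn : n = 0 := by omega
        subst hn
        rw [hθrec 1 le_rfl, hθ1]
        simp [smul_sub]
        abel
      · have hn : 1 ≤ n := by omega
        rw [hθrec (n+1) (by omega), ih hn]
        simp only [Nat.add_sub_cancel, Finset.sum_range_succ, smul_add, smul_sub]
        abel
  intro t ht
  rw [key t ht, blockProj_add, blockProj_add, blockProj_smul, blockProj_smul,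
    blockProj_sum]
  have hi : blockProj blk (b (t-1)) (Δi t) = 0 :=
    blockProj_ne blk (by simpa using hbdist t ht) (Δi t) (hΔisupp t)
  rw [hi, smul_zero, add_zero]
  congr 2
  apply Finset.sum_congr rfl
  intro s hs
  split
  · rfl
  · next h => exact blockProj_ne blk h (Δ s) (hΔsupp s)
end

section
/- Let the coordinates of ℝ^d be partitioned into B disjoint blocks, and for a block b let P_b : ℝ^d → ℝ^d be the linear map keeping the coordinates in block b and setting all other coordinates to zero. Fix a block-selection sequence b : ℕ → {1,…,B} with b_t ≠ b_{t-1} for all t ≥ 1, a global step size η > 0, and sequences (Δ_s)_{s≥0}, (Δ_s^i)_{s≥0} in ℝ^d with P_{b_s} Δ_s = Δ_s and P_{b_s} Δ_s^i = Δ_s^i for all s. Define local iterates by θ_1^i = θ_0 + η Δ_0^i and θ_{t+1}^i = θ_t^i + η Δ_t^i + η (Δ_{t-1} − Δ_{t-1}^i) for t ≥ 1, and global iterates by θ_0 given and θ_t = θ_{t-1} + η Δ_{t-1} for t ≥ 1, with the same initial point θ_0 for all clients and the server. Then for every t ≥ 1 and every client i, P_{b_{t-1}} θ_{t+1}^i =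 P_{b_{t-1}} θ_t, i.e., after the one-round-delayed correction, the block b_{t-1} of every local model exactly matches the block b_{t-1} of the global model. -/
/-- **Local–global consistency of the ParaBlock correction mechanism.**
With aggregated updates `Δ` and client updates `Δi i`, each supported on the selected
block, consecutive selected blocks distinct, local iterates
`θloc i 1 = θ0 + η Δi i 0`, `θloc i (t+1) = θloc i t + η Δi i t + η (Δ (t-1) - Δi i (t-1))`
for `t ≥ 1`, and global iterates `θg 0 = θ0`, `θg t = θg (t-1) + η Δ (t-1)` for `t ≥ 1`,
all started from the same initial point `θ0`: for every `t ≥ 1` and every client `i`,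
block `b (t-1)` of the local model `θloc i (t+1)` equals block `b (t-1)` of the global
model `θg t`. -/
theorem paraBlock_local_global_consistency
    {d B : ℕ} {ι : Type*} (blk : Fin d → Fin B) (b : ℕ → Fin B) (η : ℝ) (hη : 0 < η)
    (hbdist : ∀ t, 1 ≤ t → b t ≠ b (t - 1))
    (Δ : ℕ → EuclideanSpace ℝ (Fin d)) (Δi : ι → ℕ → EuclideanSpace ℝ (Fin d))
    (hΔsupp : ∀ s, blockProj blk (b s) (Δ s) = Δ s)
    (hΔisupp : ∀ i s, blockProj blk (b s) (Δi i s) = Δi i s)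
    (θ0 : EuclideanSpace ℝ (Fin d))
    (θloc : ι → ℕ → EuclideanSpace ℝ (Fin d)) (θg : ℕ → EuclideanSpace ℝ (Fin d))
    (hloc0 : ∀ i, θloc i 0 = θ0)
    (hloc1 : ∀ i, θloc i 1 = θ0 + η • Δi i 0)
    (hlocrec : ∀ i t, 1 ≤ t →
      θloc i (t + 1) = θloc i t + η • Δi i t + η • (Δ (t - 1) - Δi i (t - 1)))
    (hg0 : θg 0 = θ0)
    (hgrec : ∀ t, 1 ≤ t → θg t = θg (t - 1) + η • Δ (t - 1)) :
    ∀ t, 1 ≤ t → ∀ i : ι,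
      blockProj blk (b (t - 1)) (θloc i (t + 1)) = blockProj blk (b (t - 1)) (θg t) := by
  have key : ∀ t (i : ι), θloc i (t + 1) = θg t + η • Δi i t := by
    intro t
    induction t with
    | zero => intro i; rw [hloc1, hg0]
    | succ n ih =>
      intro i
      have h1 := hlocrec i (n + 1) (by omega)
      simp only [Nat.add_sub_cancel] at h1
      rw [h1, ih i, hgrec (n+1) (by omega)]
      simp only [Nat.add_sub_cancel]
      rw [smul_sub]; abel
  intro t ht i
  rw [key t i]
  ext j
  simp only [blockProj, PiLp.toLp_apply]
  by_cases h : blk j = b (t - 1)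
  · simp only [h, if_true]
    have hz : Δi i t j = 0 := by
      have := congrArg (fun v => v j) (hΔisupp i t)
      simp only [blockProj, PiLp.toLp_apply] at this
      rw [← this, if_neg]
      rw [h]; exact fun hc => hbdist t ht hc.symm
    show (θg t + η • Δi i t) j = θg t j
    simp [hz]
  · simp [h]
end
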